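/- arXiv:2402.09999 — 6 statements merged into one kernel-verified Lean document; each statement's English description precedes it below -/
import Mathlib

section
/- For a cyclic group C_n of order n and any positive integer r, the r-wise Davenport constant satisfies D_r(C_n) = r·n. -/
/-!
Among the `|G| + 1` prefix sums of `|G|` terms of a finite abelian group two agree, so the block
between them is a nonempty zero-sum subsequence of length at most `|G|`; peeling off such blocks
`r` times shows that `r |G|` terms always suffice. Conversely, in `ZMod n` every zero-sum
subsequence of `r n - 1` copies of `1` has length divisible by `n`, so `r` disjoint nonempty ones
would need at least `r n` terms.
-/

/-- `S` contains `r` pairwise disjoint nonempty zero-sum subsequences. -/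
def HasDZS {G : Type*} [AddCommGroup G] (r : ℕ) (S : Multiset G) : Prop :=
  ∃ L : List (Multiset G), L.length = r ∧ (∀ T ∈ L, T ≠ 0 ∧ T.sum = 0) ∧ L.sum ≤ S

/-- The `r`-wise Davenport constant: the least `k > 0` such that every sequence of
length at least `k` over `G` has `r` pairwise disjoint nonempty zero-sum subsequences. -/
noncomputable def DavR (G : Type*) [AddCommGroup G] (r : ℕ) : ℕ :=
  sInf {k | 0 < k ∧ ∀ S : Multiset G, k ≤ Multiset.card S → HasDZS r S}

open Multiset

variable {G : Type*} [AddCommGroup G]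

theorem Multiset.exists_le_ne_zero_sum_eq_zero_card_le [Fintype G] (S : Multiset G)
    (hS : Fintype.card G ≤ card S) :
    ∃ T ≤ S, T ≠ 0 ∧ T.sum = 0 ∧ card T ≤ Fintype.card G := by
  induction S using Quotient.inductionOn with | h l => ?_
  set N := Fintype.card G
  have hl : N ≤ l.length := hS
  obtain ⟨i, hi, j, hj, hij, hsum⟩ := Finset.exists_ne_map_eq_of_card_lt_of_maps_to
    (s := Finset.range (N + 1)) (t := Finset.univ) (f := fun i => (l.take i).sum)
    (by simp [N]) (by simp)
  wlog hlt : i < j generalizing i j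
  · exact this j hj i hi hij.symm hsum.symm (by omega)
  simp only [Finset.mem_range] at hi hj
  have hlen : ((l.take j).drop i).length = j - i := by simp; omega
  refine ⟨((l.take j).drop i : List G), ?_, ?_, ?_, ?_⟩
  · exact ((List.drop_sublist _ _).trans (List.take_sublist _ _)).subperm
  · rw [Ne, coe_eq_zero, ← List.length_eq_zero_iff, hlen]; omega
  · have hsplit := List.sum_take_add_sum_drop (l.take j) i
    rw [List.take_take, min_eq_left hlt.le, hsum] at hsplit
    simpa using hsplit
  · rw [coe_card, hlen]; omega

theorem HasDZS.succ_of_le [DecidableEq G] {r : ℕ} {S T : Multiset G} (hTS : T ≤ S) (hT : T ≠ 0)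
    (hTsum : T.sum = 0) (h : HasDZS r (S - T)) : HasDZS (r + 1) S := by
  obtain ⟨L, hlen, hL, hLS⟩ := h
  refine ⟨T :: L, by simp [hlen], ?_, ?_⟩
  · simpa [hT, hTsum] using hL
  · calc (T :: L).sum = T + L.sum := List.sum_cons
      _ ≤ T + (S - T) := add_le_add_right hLS T
      _ = S := add_tsub_cancel_of_le hTS

theorem hasDZS_of_mul_card_le [Fintype G] [DecidableEq G] (r : ℕ) (S : Multiset G)
    (hS : r * Fintype.card G ≤ card S) : HasDZS r S := by
  induction r generalizing S with
  | zero => exact ⟨[], rfl, by simp, zero_le S⟩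
  | succ r ih =>
    obtain ⟨T, hTS, hT, hTsum, hTcard⟩ :=
      S.exists_le_ne_zero_sum_eq_zero_card_le ((Nat.le_mul_of_pos_left _ r.succ_pos).trans hS)
    refine HasDZS.succ_of_le hTS hT hTsum (ih _ ?_)
    rw [card_sub hTS]
    rw [Nat.succ_mul] at hS
    omega

theorem HasDZS.mul_le_card {r m : ℕ} {S : Multiset G} (h : HasDZS r S)
    (hm : ∀ T ≤ S, T ≠ 0 → T.sum = 0 → m ≤ card T) : r * m ≤ card S := by
  obtain ⟨L, rfl, hL, hLS⟩ := h
  have hcard : ∀ k ∈ L.map cardHom, m ≤ k := by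
    simp only [cardHom_apply, List.mem_map, forall_exists_index, and_imp]
    rintro _ T hT rfl
    exact hm T ((List.le_sum_of_mem hT).trans hLS) (hL T hT).1 (hL T hT).2
  calc L.length * m ≤ (L.map cardHom).sum := by
        simpa [mul_comm] using List.card_nsmul_le_sum _ _ hcard
    _ = card L.sum := (map_list_sum cardHom L).symm
    _ ≤ card S := card_le_card hLS

theorem ZMod.le_card_of_le_replicate_one {n k : ℕ} {T : Multiset (ZMod n)}
    (hT : T ≤ replicate k 1) (hT0 : T ≠ 0) (hsum : T.sum = 0) : n ≤ Multiset.card T := by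
  obtain ⟨m, -, rfl⟩ := le_replicate_iff.1 hT
  rw [sum_replicate, nsmul_one, ZMod.natCast_eq_zero_iff] at hsum
  rw [card_replicate]
  exact Nat.le_of_dvd (Nat.pos_of_ne_zero (by rintro rfl; simp at hT0)) hsum

theorem ZMod.not_hasDZS_replicate_one {n r : ℕ} (hn : 0 < n) (hr : 0 < r) :
    ¬HasDZS r (replicate (r * n - 1) (1 : ZMod n)) := by
  intro h
  have hle := h.mul_le_card fun T hT hT0 hsum => ZMod.le_card_of_le_replicate_one hT hT0 hsum
  rw [card_replicate] at hle
  have hrn := Nat.mul_pos hr hn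
  omega

theorem davR_eq_of_forall_hasDZS_of_not_hasDZS {r k : ℕ} (hk : 0 < k)
    (hup : ∀ S : Multiset G, k ≤ card S → HasDZS r S)
    (hlow : ∃ S : Multiset G, card S + 1 = k ∧ ¬HasDZS r S) : DavR G r = k := by
  obtain ⟨S, hS, hnot⟩ := hlow
  refine le_antisymm (Nat.sInf_le ⟨hk, hup⟩) (le_csInf ⟨k, hk, hup⟩ ?_)
  rintro k' ⟨-, hk'⟩
  by_contra hlt
  exact hnot (hk' S (by omega))

/-- For the cyclic group `C_n` and `r ≥ 1`, `D_r(C_n) = r·n`. -/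
theorem stmt_1 (n r : ℕ) (hn : 0 < n) (hr : 0 < r) :
    DavR (ZMod n) r = r * n := by
  have : NeZero n := ⟨hn.ne'⟩
  have hrn := Nat.mul_pos hr hn
  refine davR_eq_of_forall_hasDZS_of_not_hasDZS hrn
    (fun S hS => hasDZS_of_mul_card_le r S (by rwa [ZMod.card]))
    ⟨replicate (r * n - 1) 1, ?_, ZMod.not_hasDZS_replicate_one hn hr⟩
  rw [card_replicate]
  omega
end

section
/- Let H be a subgroup of a finite abelian group G and let r be a positive integer. Then D_r(G) ≤ D_{D_r(H)}(G/H). -/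
/-! Project a sequence over `G` of length `D_{D_r(H)}(G/H)` to `G/H` and pick `D_r(H)` disjoint
zero-sum subsequences there. Lifted back to `G` they are disjoint nonempty blocks whose sums lie
in `H`, so the sequence of block sums has `r` disjoint zero-sum subsequences in `H`; the unions of
the corresponding blocks are `r` disjoint nonempty zero-sum subsequences of the original sequence. -/

namespace Multiset

variable {α β : Type*}

theorem exists_le_map_eq_of_le_map (g : α → β) {T : Multiset β} {S : Multiset α}
    (h : T ≤ S.map g) : ∃ T' ≤ S, T'.map g = T := by
  classical
  induction T using Multiset.induction_on generalizing S with
  | empty => exact ⟨0, zero_le _, map_zero g⟩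
  | cons b T ih =>
    obtain ⟨a, ha, rfl⟩ := mem_map.mp (mem_of_le h (mem_cons_self _ _))
    have hT : T ≤ (S.erase a).map g := by
      rwa [map_erase_of_mem _ _ ha, ← cons_le_cons_iff (g a),
        cons_erase (mem_map_of_mem g ha)]
    obtain ⟨T', hT'S, rfl⟩ := ih hT
    refine ⟨a ::ₘ T', ?_, map_cons g a T'⟩
    rwa [← cons_erase ha, cons_le_cons_iff]

theorem exists_list_lift_of_sum_le_map (g : α → β) (L : List (Multiset β)) {S : Multiset α}
    (h : L.sum ≤ S.map g) : ∃ L' : List (Multiset α), L'.map (map g) = L ∧ L'.sum ≤ S := by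
  induction L generalizing S with
  | nil => exact ⟨[], rfl, by simp⟩
  | cons T L ih =>
    rw [List.sum_cons] at h
    obtain ⟨T', hT'S, rfl⟩ := exists_le_map_eq_of_le_map g (le_trans (le_add_right _ _) h)
    obtain ⟨R, rfl⟩ := le_iff_exists_add.mp hT'S
    obtain ⟨L', rfl, hL'⟩ := ih (S := R) (by rwa [map_add, add_le_add_iff_left] at h)
    exact ⟨T' :: L', rfl, by rw [List.sum_cons]; exact add_le_add le_rfl hL'⟩

end Multiset

open Multiset

section HasDZS

variable {G Q : Type*} [AddCommGroup G] [AddCommGroup Q]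

theorem HasDZS.map {r : ℕ} {S : Multiset G} (h : HasDZS r S) (φ : G →+ Q) :
    HasDZS r (S.map φ) := by
  obtain ⟨L, hlen, hL, hLS⟩ := h
  refine ⟨L.map (Multiset.map φ), by rw [List.length_map, hlen], ?_, ?_⟩
  · simp only [List.mem_map]
    rintro _ ⟨T, hT, rfl⟩
    exact ⟨by simpa using (hL T hT).1, by rw [← map_multiset_sum, (hL T hT).2, φ.map_zero]⟩
  · rw [← Multiset.coe_mapAddMonoidHom, ← map_list_sum]
    exact Multiset.map_le_map hLS

theorem HasDZS.exists_lift (φ : G →+ Q) {s : ℕ} {S : Multiset G} (h : HasDZS s (S.map φ)) :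
    ∃ B : List (Multiset G), B.length = s ∧ (∀ T ∈ B, T ≠ 0 ∧ φ T.sum = 0) ∧ B.sum ≤ S := by
  obtain ⟨L, hlen, hL, hLS⟩ := h
  obtain ⟨B, rfl, hBS⟩ := exists_list_lift_of_sum_le_map φ L hLS
  refine ⟨B, by rw [← hlen, List.length_map], fun T hT => ?_, hBS⟩
  obtain ⟨hne, hsum⟩ := hL _ (List.mem_map_of_mem hT)
  exact ⟨by simpa using hne, by rwa [map_multiset_sum]⟩

theorem HasDZS.of_blocks {r : ℕ} {S : Multiset G} {B : Multiset (Multiset G)}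
    (hB : ∀ T ∈ B, T ≠ 0) (hBS : B.sum ≤ S) (h : HasDZS r (B.map Multiset.sum)) :
    HasDZS r S := by
  obtain ⟨K, hlen, hK, hKB⟩ := h
  obtain ⟨K', rfl, hK'B⟩ := exists_list_lift_of_sum_le_map Multiset.sum K hKB
  refine ⟨K'.map Multiset.sum, by rw [← hlen, List.length_map, List.length_map], ?_, ?_⟩
  · simp only [List.mem_map]
    rintro _ ⟨W, hW, rfl⟩
    obtain ⟨hne, hsum⟩ := hK _ (List.mem_map_of_mem hW)
    refine ⟨fun hW0 => ?_, sum_join.trans hsum⟩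
    obtain ⟨T, hT⟩ := exists_mem_of_ne_zero (ne_of_apply_ne (Multiset.map Multiset.sum) hne)
    have hTB : T ∈ B := mem_of_le hK'B (mem_of_le (List.le_sum_of_mem hW) hT)
    exact hB T hTB (le_zero.mp (hW0 ▸ le_sum_of_mem hT))
  · obtain ⟨C, rfl⟩ := Multiset.le_iff_exists_add.mp hK'B
    rw [sum_add] at hBS
    rw [← coe_sumAddMonoidHom, ← map_list_sum, coe_sumAddMonoidHom]
    exact le_trans (le_add_right _ _) hBS

theorem HasDZS.of_map_of_ker_le (φ : G →+ Q) {H : AddSubgroup G} (hφ : φ.ker ≤ H) {r s : ℕ}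
    (hH : ∀ T : Multiset H, s ≤ card T → HasDZS r T) {S : Multiset G}
    (hS : HasDZS s (S.map φ)) : HasDZS r S := by
  obtain ⟨B, hlen, hB, hBS⟩ := hS.exists_lift φ
  have hsum_mem : ∀ x ∈ (B : Multiset (Multiset G)).map sum, x ∈ H := by
    simp only [mem_map, mem_coe]
    rintro _ ⟨T, hT, rfl⟩
    exact hφ (hB T hT).2
  refine HasDZS.of_blocks (B := B) (fun T hT => (hB T hT).1) (by rwa [sum_coe]) ?_
  have hsums : (((B : Multiset (Multiset G)).map sum).pmap (fun x hx => (⟨x, hx⟩ : H))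
      hsum_mem).map H.subtype = (B : Multiset (Multiset G)).map sum := by
    rw [map_pmap]
    exact (pmap_eq_map _ _ _ _).trans (map_id' _)
  rw [← hsums]
  exact (hH _ (by simp [hlen])).map H.subtype

end HasDZS

section DavR

variable {G : Type*} [AddCommGroup G]

-- A crude bound; it only serves to show that the set whose infimum is `DavR G r` is nonempty.
theorem hasDZS_of_mul_card_sq_le [Fintype G] (r : ℕ) {S : Multiset G}
    (hS : r * Fintype.card G ^ 2 ≤ card S) : HasDZS r S := by
  classical
  obtain ⟨g, hg⟩ : ∃ g, r * Fintype.card G ≤ count g S := by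
    by_contra! h
    have := Finset.sum_lt_sum_of_nonempty Finset.univ_nonempty (fun g _ => h g)
    rw [Multiset.sum_count_eq_card (fun a _ => Finset.mem_univ a)] at this
    simp only [Finset.sum_const, Finset.card_univ, smul_eq_mul] at this
    nlinarith
  refine ⟨List.replicate r (replicate (addOrderOf g) g), List.length_replicate, ?_, ?_⟩
  · intro T hT
    rw [List.eq_of_mem_replicate hT]
    exact ⟨card_pos.mp (by simpa using addOrderOf_pos g), by simp [addOrderOf_nsmul_eq_zero]⟩
  · rw [List.sum_replicate, nsmul_replicate, ← le_count_iff_replicate_le]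
    exact le_trans (Nat.mul_le_mul_left r addOrderOf_le_card_univ) hg

theorem davR_spec [Finite G] (r : ℕ) :
    0 < DavR G r ∧ ∀ S : Multiset G, DavR G r ≤ card S → HasDZS r S := by
  have := Fintype.ofFinite G
  exact Nat.sInf_mem (s := {k | 0 < k ∧ ∀ S : Multiset G, k ≤ card S → HasDZS r S})
    ⟨r * Fintype.card G ^ 2 + 1, Nat.succ_pos _, fun S hS => hasDZS_of_mul_card_sq_le r (by omega)⟩

theorem davR_le {r k : ℕ} (hk : 0 < k) (h : ∀ S : Multiset G, k ≤ card S → HasDZS r S) :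
    DavR G r ≤ k :=
  Nat.sInf_le ⟨hk, h⟩

theorem davR_le_davR_davR_of_ker_le {Q : Type*} [AddCommGroup Q] [Finite Q] (φ : G →+ Q)
    {H : AddSubgroup G} [Finite H] (hφ : φ.ker ≤ H) (r : ℕ) :
    DavR G r ≤ DavR Q (DavR H r) :=
  davR_le (davR_spec _).1 fun S hS =>
    HasDZS.of_map_of_ker_le φ hφ (davR_spec r).2 ((davR_spec _).2 _ (by rwa [card_map]))

end DavR

theorem stmt_3_general (G : Type*) [AddCommGroup G] [Fintype G] (H : AddSubgroup G)
    (r : ℕ) :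
    DavR G r ≤ DavR (G ⧸ H) (DavR H r) :=
  davR_le_davR_davR_of_ker_le (QuotientAddGroup.mk' H) (QuotientAddGroup.ker_mk' H).le r

/-- If `H` is a subgroup of a finite abelian group `G` and `r ≥ 1`, then
`D_r(G) ≤ D_{D_r(H)}(G/H)`. -/
theorem stmt_3 (G : Type*) [AddCommGroup G] [Fintype G] (H : AddSubgroup G)
    (r : ℕ) (hr : 0 < r) :
    DavR G r ≤ DavR (G ⧸ H) (DavR H r) :=
  stmt_3_general G H r
end

section
/- Let G be a finite abelian group and r ≥ 1 an integer. If η(G) ≤ D(G) + exp(G), then η_r(G) ≤ D(G) + r·exp(G). -/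
/-- `S` contains `r` pairwise disjoint short (length at most `exp G`) nonempty
zero-sum subsequences. -/
def HasShortDZS {G : Type*} [AddCommGroup G] (r : ℕ) (S : Multiset G) : Prop :=
  ∃ L : List (Multiset G), L.length = r ∧
    (∀ T ∈ L, T ≠ 0 ∧ T.sum = 0 ∧ Multiset.card T ≤ AddMonoid.exponent G) ∧ L.sum ≤ S

/-- The generalized eta-invariant `η_r(G)`. -/
noncomputable def EtaR (G : Type*) [AddCommGroup G] (r : ℕ) : ℕ :=
  sInf {k | 0 < k ∧ ∀ S : Multiset G, k ≤ Multiset.card S → HasShortDZS r S}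

/-!
`η(G)` is finite because a long enough sequence repeats some element `exp(G)` times.
Removing a short zero-sum subsequence from a sequence costs at most `exp(G)` terms, so starting
from a sequence of length at least `η(G) + (r - 1)·exp(G)` one can greedily remove `r` disjoint
short zero-sum subsequences. Hence `η_r(G) ≤ η(G) + (r - 1)·exp(G) ≤ D(G) + r·exp(G)`.
-/

namespace HasShortDZS

variable {G : Type*} [AddCommGroup G]

theorem cons [DecidableEq G] {r : ℕ} {S T : Multiset G} (hT : T ≠ 0) (hTsum : T.sum = 0)
    (hTcard : Multiset.card T ≤ AddMonoid.exponent G) (hTS : T ≤ S)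
    (hrest : HasShortDZS r (S - T)) : HasShortDZS (r + 1) S := by
  obtain ⟨L, hlen, hL, hLS⟩ := hrest
  refine ⟨T :: L, by rw [List.length_cons, hlen], ?_, ?_⟩
  · rintro U (_ | ⟨_, hU⟩)
    · exact ⟨hT, hTsum, hTcard⟩
    · exact hL U hU
  · rw [List.sum_cons]
    exact (le_tsub_iff_left hTS).mp hLS

theorem one_of_exponent_le_count [DecidableEq G] {S : Multiset G} {g : G}
    (hg : AddMonoid.exponent G ≤ S.count g) (hexp : 0 < AddMonoid.exponent G) :
    HasShortDZS 1 S := by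
  refine ⟨[Multiset.replicate (AddMonoid.exponent G) g], rfl, ?_, ?_⟩
  · rintro T (_ | ⟨_, ⟨⟩⟩)
    refine ⟨?_, ?_, ?_⟩
    · exact Multiset.card_pos.mp (by rwa [Multiset.card_replicate])
    · rw [Multiset.sum_replicate, AddMonoid.exponent_nsmul_eq_zero]
    · rw [Multiset.card_replicate]
  · simpa using Multiset.le_count_iff_replicate_le.mp hg

theorem of_card_le {N : ℕ} (hN : ∀ S : Multiset G, N ≤ Multiset.card S → HasShortDZS 1 S)
    (r : ℕ) {S : Multiset G} (hS : N + r * AddMonoid.exponent G ≤ Multiset.card S) :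
    HasShortDZS (r + 1) S := by
  classical
  induction r generalizing S with
  | zero => exact hN S (by simpa using hS)
  | succ r ih =>
    obtain ⟨L, hlen, hL, hLS⟩ := hN S (le_trans (Nat.le_add_right _ _) hS)
    obtain ⟨T, rfl⟩ := List.length_eq_one_iff.mp hlen
    obtain ⟨hT, hTsum, hTcard⟩ := hL T (List.mem_singleton_self T)
    have hTS : T ≤ S := by simpa using hLS
    refine cons hT hTsum hTcard hTS (ih ?_)
    rw [Multiset.card_sub hTS]; rw [Nat.succ_mul] at hS
    omega

end HasShortDZS

section Fintype

variable {G : Type*} [AddCommGroup G] [Fintype G]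

theorem exists_exponent_le_count [DecidableEq G] {S : Multiset G}
    (hS : (AddMonoid.exponent G - 1) * Fintype.card G < Multiset.card S) :
    ∃ g, AddMonoid.exponent G ≤ S.count g := by
  have hsum : ∑ _g : G, (AddMonoid.exponent G - 1) < ∑ g : G, S.count g := by
    rwa [Multiset.sum_count_eq_card (fun a _ => Finset.mem_univ a), Finset.sum_const,
      Finset.card_univ, smul_eq_mul, mul_comm]
  obtain ⟨g, -, hg⟩ := Finset.exists_lt_of_sum_lt hsum
  exact ⟨g, by omega⟩

theorem hasShortDZS_one_of_card_le {S : Multiset G}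
    (hS : (AddMonoid.exponent G - 1) * Fintype.card G + 1 ≤ Multiset.card S) :
    HasShortDZS 1 S := by
  classical
  obtain ⟨_, hg⟩ := exists_exponent_le_count hS
  exact HasShortDZS.one_of_exponent_le_count hg
    (AddMonoid.ExponentExists.exponent_pos AddMonoid.ExponentExists.of_finite)

theorem etaR_one_spec :
    0 < EtaR G 1 ∧ ∀ S : Multiset G, EtaR G 1 ≤ Multiset.card S → HasShortDZS 1 S :=
  Nat.sInf_mem (s := {k | 0 < k ∧ ∀ S : Multiset G, k ≤ Multiset.card S → HasShortDZS 1 S})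
    ⟨_, Nat.succ_pos _, fun _ => hasShortDZS_one_of_card_le⟩

theorem etaR_succ_le (r : ℕ) : EtaR G (r + 1) ≤ EtaR G 1 + r * AddMonoid.exponent G :=
  Nat.sInf_le ⟨Nat.add_pos_left etaR_one_spec.1 _,
    fun _ => HasShortDZS.of_card_le etaR_one_spec.2 r⟩

end Fintype

/-- If `η(G) ≤ D(G) + exp(G)`, then `η_r(G) ≤ D(G) + r·exp(G)` for all `r ≥ 1`. -/
theorem stmt_5 (G : Type*) [AddCommGroup G] [Fintype G] (r : ℕ) (hr : 1 ≤ r)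
    (h : EtaR G 1 ≤ DavR G 1 + AddMonoid.exponent G) :
    EtaR G r ≤ DavR G 1 + r * AddMonoid.exponent G := by
  obtain ⟨n, rfl⟩ : ∃ n, r = n + 1 := ⟨r - 1, by omega⟩
  calc EtaR G (n + 1) ≤ EtaR G 1 + n * AddMonoid.exponent G := etaR_succ_le n
    _ ≤ DavR G 1 + (n + 1) * AddMonoid.exponent G := by rw [Nat.succ_mul]; omega
end

section
/- Let G be a finite abelian group and r ≥ 2 an integer. If η_{r−1}(G) ≤ D(G) + (r−1)·exp(G), then D_r(G) ≤ D(G) + (r−1)·exp(G). -/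
/-!
Let `K = D(G) + (r-1)·exp(G)` and let `S` have length at least `K ≥ η_{r-1}(G)`. Then `S`
contains `r - 1` disjoint short zero-sum subsequences, of total length at most `(r-1)·exp(G)`.
What is left of `S` has length at least `D(G)`, so it contains one further nonempty zero-sum
subsequence.
-/

theorem Multiset.card_list_sum_le {α : Type*} {L : List (Multiset α)} {e : ℕ}
    (h : ∀ T ∈ L, Multiset.card T ≤ e) :
    Multiset.card L.sum ≤ L.length * e := by
  induction L with
  | nil => simp
  | cons T L ih =>
    simp only [List.sum_cons, Multiset.card_add, List.length_cons, List.forall_mem_cons] at h ⊢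
    linarith [ih h.2, h.1]

theorem Multiset.exists_lt_count_of_mul_lt_card {α : Type*} [Fintype α] [DecidableEq α]
    {S : Multiset α} {c : ℕ} (hS : Fintype.card α * c < Multiset.card S) :
    ∃ a, c < S.count a := by
  by_contra! hle
  have hsum : Multiset.card S ≤ Fintype.card α * c := by
    rw [← Multiset.sum_count_eq_card (s := Finset.univ) fun a _ => Finset.mem_univ a]
    simpa using Finset.sum_le_card_nsmul Finset.univ _ c fun a _ => hle a
  omega

section ZeroSumSubsequences

variable {G : Type*} [AddCommGroup G]

theorem HasDZS.add {r s : ℕ} {S T : Multiset G} (hS : HasDZS r S) (hT : HasDZS s T) :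
    HasDZS (r + s) (S + T) := by
  obtain ⟨L, hL, hLzero, hLle⟩ := hS
  obtain ⟨M, hM, hMzero, hMle⟩ := hT
  refine ⟨L ++ M, by simp [hL, hM], ?_, ?_⟩
  · simpa only [List.mem_append] using fun T hT => hT.elim (hLzero T) (hMzero T)
  · simpa only [List.sum_append] using add_le_add hLle hMle

theorem HasShortDZS.hasDZS {r : ℕ} {S : Multiset G} (h : HasShortDZS r S) : HasDZS r S :=
  let ⟨L, hlen, hzero, hle⟩ := h
  ⟨L, hlen, fun T hT => ⟨(hzero T hT).1, (hzero T hT).2.1⟩, hle⟩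

theorem HasShortDZS.exists_le_hasDZS {r : ℕ} {S : Multiset G} (h : HasShortDZS r S) :
    ∃ T ≤ S, Multiset.card T ≤ r * AddMonoid.exponent G ∧ HasDZS r T := by
  obtain ⟨L, hlen, hshort, hle⟩ := h
  refine ⟨L.sum, hle, hlen ▸ Multiset.card_list_sum_le fun T hT => (hshort T hT).2.2, L, hlen,
    fun T hT => ⟨(hshort T hT).1, (hshort T hT).2.1⟩, le_rfl⟩

theorem hasShortDZS_of_le_count [Finite G] [DecidableEq G] {r : ℕ} {S : Multiset G} {g : G}
    (hg : r * AddMonoid.exponent G ≤ S.count g) : HasShortDZS r S := by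
  have hord := AddMonoid.addOrderOf_le_exponent AddMonoid.ExponentExists.of_finite g
  refine ⟨List.replicate r (Multiset.replicate (addOrderOf g) g), List.length_replicate, ?_, ?_⟩
  · rintro T hT
    rw [(List.mem_replicate.mp hT).2]
    refine ⟨?_, by simp [addOrderOf_nsmul_eq_zero], by simpa using hord⟩
    exact Multiset.card_pos.mp (by simpa using addOrderOf_pos g)
  · rw [List.sum_replicate, Multiset.nsmul_replicate, ← Multiset.le_count_iff_replicate_le]
    exact (Nat.mul_le_mul_left r hord).trans hg

end ZeroSumSubsequences

section Invariants

variable {G : Type*} [AddCommGroup G] [Fintype G]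

-- `sInf ∅ = 0`, so `EtaR` and `DavR` only have their defining property once such a `k` exists.
theorem exists_card_forall_hasShortDZS (r : ℕ) :
    ∃ k, 0 < k ∧ ∀ S : Multiset G, k ≤ Multiset.card S → HasShortDZS r S := by
  classical
  refine ⟨Fintype.card G * (r * AddMonoid.exponent G) + 1, Nat.succ_pos _, fun S hS => ?_⟩
  obtain ⟨g, hg⟩ := Multiset.exists_lt_count_of_mul_lt_card hS
  exact hasShortDZS_of_le_count hg.le

theorem hasShortDZS_of_etaR_le_card (r : ℕ) {S : Multiset G} (hS : EtaR G r ≤ Multiset.card S) :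
    HasShortDZS r S :=
  (Nat.sInf_mem (exists_card_forall_hasShortDZS r)).2 S hS

theorem davR_one_mem :
    DavR G 1 ∈ {k | 0 < k ∧ ∀ S : Multiset G, k ≤ Multiset.card S → HasDZS 1 S} :=
  Nat.sInf_mem <|
    let ⟨k, hk, hshort⟩ := exists_card_forall_hasShortDZS (G := G) 1
    ⟨k, hk, fun S hS => (hshort S hS).hasDZS⟩

end Invariants

/-- If `η_{r-1}(G) ≤ D(G) + (r-1)·exp(G)` for an integer `r ≥ 2`, then
`D_r(G) ≤ D(G) + (r-1)·exp(G)`. -/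
theorem stmt_6 (G : Type*) [AddCommGroup G] [Fintype G] (r : ℕ) (hr : 2 ≤ r)
    (h : EtaR G (r - 1) ≤ DavR G 1 + (r - 1) * AddMonoid.exponent G) :
    DavR G r ≤ DavR G 1 + (r - 1) * AddMonoid.exponent G := by
  classical
  obtain ⟨hDpos, hD⟩ := davR_one_mem (G := G)
  refine Nat.sInf_le ⟨by omega, fun S hS => ?_⟩
  obtain ⟨T, hTS, hTcard, hT⟩ :=
    (hasShortDZS_of_etaR_le_card (r - 1) (h.trans hS)).exists_le_hasDZS
  have hrest_card : DavR G 1 ≤ Multiset.card (S - T) := by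
    rw [Multiset.card_sub hTS]
    omega
  have hrest : HasDZS 1 (S - T) := hD _ hrest_card
  simpa [Nat.sub_add_cancel (by omega : 1 ≤ r), add_tsub_cancel_of_le hTS] using hT.add hrest
end

section
/- Let p be a prime, q, d ∈ ℕ with gcd(p,q) = 1, and G = C_p^d × C_q. Let m = p(q+d−1) − (d−1) and let S = (x_1,y_1)...(x_m,y_m) be a sequence over G in which at most pq of the y-coordinates are nonzero. Then S has a nonempty zero-sum subsequence. -/
/-!
Split `S` according to whether the `C_q`-coordinate vanishes. Each term with `y = 0` is a
one-term block with `y`-sum zero; from the at most `pq` remaining terms, greedily extract disjoint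
nonempty blocks of at most `q` terms with `y`-sum zero (pigeonhole on prefix sums). Counting shows
that there are more than `d(p-1)` blocks, so Olson's bound `D(C_p^d) = d(p-1)+1`, proved via
Chevalley–Warning, applied to the `x`-sums of the blocks gives a nonempty union of blocks with
zero sum.
-/

open Finset MvPolynomial in
theorem ZMod.exists_nonempty_subset_sum_eq_zero {ι κ : Type*} [Fintype κ] {p : ℕ} [Fact p.Prime]
    (a : ι → κ → ZMod p) {s : Finset ι} (hs : Fintype.card κ * (p - 1) < #s) :
    ∃ t ⊆ s, t.Nonempty ∧ ∑ i ∈ t, a i = 0 := by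
  classical
  have hp := (Fact.out : p.Prime)
  -- A nonzero common root `x` of these polynomials yields `t = {i | x i ≠ 0}`, by Fermat.
  let f : κ → MvPolynomial s (ZMod p) := fun k => ∑ i : s, a i k • X i ^ (p - 1)
  have hdeg : ∑ k, (f k).totalDegree < Fintype.card s := calc
      _ ≤ ∑ _k : κ, (p - 1) := Finset.sum_le_sum fun k _ => totalDegree_finsetSum_le fun i _ =>
        (totalDegree_smul_le ..).trans (totalDegree_X_pow ..).le
      _ < Fintype.card s := by simpa [mul_comm] using hs
  let zero_sol : {x : s → ZMod p // ∀ k, eval x (f k) = 0} :=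
    ⟨0, fun k => by simp [f, hp.one_lt, tsub_eq_zero_iff_le]⟩
  have hpN := char_dvd_card_solutions_of_fintype_sum_lt p hdeg
  obtain ⟨x, hx⟩ := Fintype.exists_ne_of_one_lt_card
    (hp.one_lt.trans_le (Nat.le_of_dvd (@Fintype.card_pos _ _ ⟨zero_sol⟩) hpN)) zero_sol
  refine ⟨({i | x.1 i ≠ 0} : Finset s).map (Function.Embedding.subtype _), ?_, ?_, ?_⟩
  · simp +contextual [subset_iff]
  · rw [← Subtype.coe_ne_coe, Function.ne_iff] at hx
    obtain ⟨i, hi⟩ := hx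
    exact ⟨i, by simpa [zero_sol] using hi⟩
  · funext k
    simpa [f, ZMod.pow_card_sub_one, Finset.sum_filter] using x.2 k

theorem ZMod.exists_le_ne_zero_map_sum_eq_zero {α κ : Type*} [Fintype κ] {p : ℕ} [Fact p.Prime]
    (f : α → κ → ZMod p) (M : Multiset α) (hM : Fintype.card κ * (p - 1) < Multiset.card M) :
    ∃ T ≤ M, T ≠ 0 ∧ (T.map f).sum = 0 := by
  classical
  obtain ⟨t, hts, ht, hsum⟩ :=
    exists_nonempty_subset_sum_eq_zero (s := M.toEnumFinset) (f ∘ Prod.fst) (by simpa using hM)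
  exact ⟨t.1.map Prod.fst, Multiset.map_fst_le_of_subset_toEnumFinset hts,
    by simpa using ht.ne_empty, by simpa [Multiset.map_map] using hsum⟩

namespace Multiset

variable {α G : Type*} [AddCommGroup G]

theorem exists_le_card_le_map_sum_eq_zero [Fintype G] (f : α → G) (M : Multiset α)
    (hM : Fintype.card G ≤ card M) :
    ∃ T ≤ M, T ≠ 0 ∧ card T ≤ Fintype.card G ∧ (T.map f).sum = 0 := by
  -- Two of the `|G| + 1` prefix sums coincide; take the segment between them.
  obtain ⟨i, j, hij, heq⟩ := Fintype.exists_ne_map_eq_of_card_lt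
    (fun k : Fin (Fintype.card G + 1) => ((M.toList.take k).map f).sum) (by simp)
  wlog hlt : i < j generalizing i j
  · exact this j i hij.symm heq.symm (lt_of_le_of_ne (not_lt.1 hlt) hij.symm)
  rw [Fin.lt_def] at hlt
  have hj := j.isLt
  refine ⟨((M.toList.take j).drop i : List α), ?_, ?_, ?_, ?_⟩
  · conv_rhs => rw [← coe_toList M]
    exact coe_le.2 ((List.drop_sublist _ _).trans (List.take_sublist _ _)).subperm
  · simp only [ne_eq, coe_eq_zero, ← List.length_eq_zero_iff, List.length_drop,
      List.length_take, length_toList]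
    omega
  · simp only [coe_card, List.length_drop, List.length_take, length_toList]
    omega
  · have hsplit := List.take_append_drop i (M.toList.take j)
    rw [List.take_take, min_eq_left hlt.le] at hsplit
    rw [← hsplit, List.map_append, List.sum_append, left_eq_add] at heq
    simpa using heq

def IsZeroSumPacking (f : α → G) (M : Multiset α) (B : Multiset (Multiset α)) : Prop :=
  B.join ≤ M ∧ ∀ b ∈ B, b ≠ 0 ∧ (b.map f).sum = 0

theorem isZeroSumPacking_map_singleton {f : α → G} {M : Multiset α} (h : ∀ a ∈ M, f a = 0) :
    IsZeroSumPacking f M (M.map ({·})) := by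
  refine ⟨by rw [← bind, bind_singleton, map_id'], ?_⟩
  simp only [mem_map, forall_exists_index, and_imp, forall_apply_eq_imp_iff₂]
  exact fun a ha => ⟨singleton_ne_zero a, by simpa using h a ha⟩

theorem IsZeroSumPacking.add {f : α → G} {M₁ M₂ : Multiset α} {B₁ B₂ : Multiset (Multiset α)}
    (h₁ : IsZeroSumPacking f M₁ B₁) (h₂ : IsZeroSumPacking f M₂ B₂) :
    IsZeroSumPacking f (M₁ + M₂) (B₁ + B₂) := by
  refine ⟨by rw [join_add]; exact add_le_add h₁.1 h₂.1, fun b hb => ?_⟩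
  rcases mem_add.1 hb with hb | hb
  exacts [h₁.2 b hb, h₂.2 b hb]

theorem exists_isZeroSumPacking_card_lt [Fintype G] (f : α → G) (M : Multiset α) :
    ∃ B, IsZeroSumPacking f M B ∧ card M < (card B + 1) * Fintype.card G := by
  classical
  induction hM : card M using Nat.strong_induction_on generalizing M with
  | _ n ih =>
  by_cases hlt : n < Fintype.card G
  · exact ⟨0, ⟨by simp, by simp⟩, by simpa⟩
  obtain ⟨T, hTM, hT0, hTcard, hTsum⟩ := exists_le_card_le_map_sum_eq_zero f M (by omega)
  have hTpos := card_pos.2 hT0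
  have hrest : card (M - T) = n - card T := by rw [card_sub hTM, hM]
  obtain ⟨B, hB, hcard⟩ := ih _ (by omega) (M - T) hrest
  refine ⟨T ::ₘ B, ⟨?_, ?_⟩, ?_⟩
  · rw [join_cons, ← add_tsub_cancel_of_le hTM]
    exact add_le_add le_rfl hB.1
  · simp only [mem_cons, forall_eq_or_imp]
    exact ⟨⟨hT0, hTsum⟩, hB.2⟩
  · have := add_one_mul (card B + 1) (Fintype.card G)
    rw [card_cons]
    omega

theorem IsZeroSumPacking.exists_le_sum_eq_zero {κ H : Type*} [Fintype κ] [AddCommGroup H]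
    {p : ℕ} [Fact p.Prime] {M : Multiset ((κ → ZMod p) × H)} {B : Multiset (Multiset _)}
    (hB : IsZeroSumPacking Prod.snd M B) (hcard : Fintype.card κ * (p - 1) < card B) :
    ∃ T ≤ M, T ≠ 0 ∧ T.sum = 0 := by
  obtain ⟨C, hCB, hC0, hC⟩ :=
    ZMod.exists_le_ne_zero_map_sum_eq_zero (fun b => (b.map Prod.fst).sum) B hcard
  have hCjoin : C.join ≤ B.join := by
    obtain ⟨D, rfl⟩ := le_iff_exists_add.1 hCB
    rw [join_add]
    exact le_self_add
  refine ⟨C.join, hCjoin.trans hB.1, ?_, ?_⟩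
  · obtain ⟨b, hb⟩ := exists_mem_of_ne_zero hC0
    exact fun h => (hB.2 b (mem_of_le hCB hb)).1 (sum_eq_zero_iff.1 h b hb)
  · refine Prod.ext ?_ ?_
    · rw [fst_sum, map_join, sum_join, map_map]
      exact hC
    · rw [snd_sum, map_join, sum_join, map_map]
      exact sum_eq_zero fun x hx => by
        obtain ⟨b, hb, rfl⟩ := mem_map.1 hx
        exact (hB.2 b (mem_of_le hCB hb)).2

end Multiset

theorem Nat.mul_sub_one_lt_add_of_lt_succ_mul {p q d c₀ c₁ b : ℕ} (hp : 1 ≤ p) (hd : 1 ≤ d)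
    (hc : c₁ + c₀ = p * (q + d - 1) - (d - 1)) (hc₁ : c₁ ≤ p * q) (hb : c₁ < (b + 1) * q) :
    d * (p - 1) < b + c₀ := by
  have hq : 1 ≤ q := Nat.pos_of_ne_zero (by rintro rfl; simp at hb)
  have hm : c₁ + c₀ + (d - 1) = p * (q + d - 1) := by
    have : d - 1 ≤ 1 * (q + d - 1) := by omega
    have := this.trans (Nat.mul_le_mul_right _ hp)
    omega
  zify [hp, hd, hq, show 1 ≤ q + d by omega] at hm hb ⊢
  have : (q - 1 : ℤ) * c₁ ≤ (q - 1) * (p * q) :=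
    mul_le_mul_of_nonneg_left (by exact_mod_cast hc₁) (by omega)
  nlinarith

open Multiset in
theorem stmt_10_general (p q d : ℕ) (hp : p.Prime) (hq : 0 < q) (hd : 0 < d)
    (S : Multiset ((Fin d → ZMod p) × ZMod q))
    (hcard : Multiset.card S = p * (q + d - 1) - (d - 1))
    (hfew : Multiset.card (S.filter fun a => a.2 ≠ 0) ≤ p * q) :
    ∃ T, T ≤ S ∧ T ≠ 0 ∧ T.sum = 0 := by
  have : Fact p.Prime := ⟨hp⟩
  have : NeZero q := ⟨hq.ne'⟩
  set S₀ := S.filter fun a => ¬a.2 ≠ 0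
  set S₁ := S.filter fun a => a.2 ≠ 0
  have hB₀ : IsZeroSumPacking Prod.snd S₀ (S₀.map ({·})) :=
    isZeroSumPacking_map_singleton fun a ha => not_not.1 (mem_filter.1 ha).2
  obtain ⟨B₁, hB₁, hB₁card⟩ := exists_isZeroSumPacking_card_lt Prod.snd S₁
  have hB := hB₁.add hB₀
  rw [filter_add_not] at hB
  refine hB.exists_le_sum_eq_zero ?_
  rw [ZMod.card] at hB₁card
  rw [Fintype.card_fin, card_add, card_map]
  refine Nat.mul_sub_one_lt_add_of_lt_succ_mul hp.one_le hd ?_ hfew hB₁card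
  rw [← hcard, ← card_add, filter_add_not]

/-- Let `p` be a prime, `gcd(p,q) = 1`, `G = C_p^d × C_q`, and
`m = p(q+d-1) - (d-1)`. Every sequence over `G` of length `m` in which at most
`pq` of the `y`-coordinates are nonzero has a nonempty zero-sum subsequence. -/
theorem stmt_10 (p q d : ℕ) (hp : p.Prime) (hq : 0 < q) (hd : 0 < d)
    (hco : Nat.Coprime p q)
    (S : Multiset ((Fin d → ZMod p) × ZMod q))
    (hcard : Multiset.card S = p * (q + d - 1) - (d - 1))
    (hfew : Multiset.card (S.filter fun a => a.2 ≠ 0) ≤ p * q) :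
    ∃ T, T ≤ S ∧ T ≠ 0 ∧ T.sum = 0 :=
  stmt_10_general p q d hp hq hd S hcard hfew
end

section
/- Let p be a prime and e_1 ≤ e_2 ≤ ... ≤ e_d positive integers with p^{e_d} ≥ 1 + Σ_{i=1}^{d−1}(p^{e_i} − 1). Then for G = C_{p^{e_1}} × ... × C_{p^{e_d}}, we have η(G) ≤ D(G) + exp(G) = 2p^{e_d} + Σ_{i=1}^{d−1} p^{e_i} − d. -/
/-!
Olson's argument: in `𝔽_p[G]` every `X^g - 1` lies in the ideal generated by the `X^{b_j} - 1`
for generators `b_j` of order dividing `p^{n_j}`, and `(X^{b_j} - 1)^{p^{n_j}} = 0`. By pigeonhole a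
product of more than `∑ (p^{n_j} - 1)` elements of that ideal vanishes, whereas the constant
coefficient of `∏ (X^{g_i} - 1)` is `(-1)^n` when no nonempty subsequence of `(g_i)` sums to zero.
With the sequence of `p^{e_j} - 1` copies of each basis vector this gives
`D(G) = 1 + ∑ (p^{e_j} - 1)`.

For `η`, send each `g` to `(1, g) ∈ C_m × G` with `m = exp G`. A zero-sum subsequence there has
length divisible by `m`, and since `D(C_m × G) = m + D(G) - 1 < 3m` it has length `m` or `2m`.
One of length `2m` contains, as `D(G) < 2m`, a zero-sum subsequence of length at most `2m - 1`,
and either it or its complement has length at most `m`.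
-/

open Finset

theorem Multiset.exists_le_map_eq_of_le_map_s12 {α β : Type*} {f : α → β} {s : Multiset α}
    {T : Multiset β} (h : T ≤ s.map f) : ∃ t ≤ s, t.map f = T := by
  induction s using Quotient.inductionOn
  induction T using Quotient.inductionOn
  obtain ⟨l, hperm, hsub⟩ := h
  obtain ⟨l', hl', rfl⟩ := List.sublist_map_iff.1 hsub
  exact ⟨l', hl'.subperm, Quotient.sound hperm⟩

theorem Multiset.exists_le_card_eq {α : Type*} {s : Multiset α} {n : ℕ} (h : n ≤ card s) :
    ∃ t ≤ s, card t = n := by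
  obtain ⟨t, ht⟩ := card_pos_iff_exists_mem.1 ((card_powersetCard n s).symm ▸ Nat.choose_pos h)
  exact ⟨t, mem_powersetCard.1 ht⟩

theorem Finset.card_filter_sigma_fst_eq {ι : Type*} [Fintype ι] [DecidableEq ι] (m : ι → ℕ)
    (j : ι) : #{x : Σ i, Fin (m i) | x.1 = j} = m j := by
  have : ({x : Σ i, Fin (m i) | x.1 = j} : Finset _) = univ.map (.sigmaMk j) := by
    ext ⟨i, a⟩
    simp only [mem_filter, mem_univ, true_and, mem_map, Function.Embedding.sigmaMk_apply]
    constructor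
    · rintro rfl
      exact ⟨a, rfl⟩
    · rintro ⟨b, h⟩
      exact (Sigma.mk.inj_iff.1 h).1.symm
  simp [this]

theorem Fintype.exists_le_card_fiber_of_sum_lt_card {κ ι : Type*} [Fintype κ] [Fintype ι]
    [DecidableEq ι] (φ : κ → ι) (N : ι → ℕ) (h : ∑ j, (N j - 1) < Fintype.card κ) :
    ∃ j, N j ≤ #{i | φ i = j} := by
  by_contra! hlt
  have hfib : #(univ : Finset κ) = ∑ j, #{i | φ i = j} :=
    card_eq_sum_card_fiberwise fun _ _ => mem_univ _
  have := sum_le_sum fun j (_ : j ∈ univ) => Nat.le_sub_one_of_lt (hlt j)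
  rw [card_univ] at hfib
  omega

theorem prod_eq_zero_of_mem_span_range {R ι κ : Type*} [CommRing R] [Fintype ι] [Fintype κ]
    {v : ι → R} {N : ι → ℕ} (hv : ∀ j, v j ^ N j = 0) {x : κ → R}
    (hx : ∀ i, x i ∈ Ideal.span (Set.range v)) (hcard : ∑ j, (N j - 1) < Fintype.card κ) :
    ∏ i, x i = 0 := by
  classical
  choose r hr using fun i => Ideal.mem_span_range_iff_exists_fun.1 (hx i)
  simp_rw [← hr, Fintype.prod_sum, prod_mul_distrib]
  refine sum_eq_zero fun φ _ => ?_
  obtain ⟨j, hj⟩ := Fintype.exists_le_card_fiber_of_sum_lt_card φ N hcard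
  have hfiber : ∏ i ∈ univ with φ i = j, v j = 0 := by
    rw [prod_const]
    exact pow_eq_zero_of_le hj (hv j)
  rw [← prod_fiberwise' univ φ v, prod_eq_zero (mem_univ j) hfiber, mul_zero]

namespace AddMonoidAlgebra

variable {k G : Type*} [CommRing k] [AddCommMonoid G]

theorem single_add_sub_one (a b : G) :
    (single (a + b) 1 - 1 : k[G]) =
      (single a 1 - 1) * (single b 1 - 1) + (single a 1 - 1) + (single b 1 - 1) := by
  rw [← one_mul (1 : k), ← single_mul_single, one_mul]
  ring

theorem single_sub_one_mem_span_of_closure_eq_top {ι : Type*} {b : ι → G}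
    (hb : AddSubmonoid.closure (Set.range b) = ⊤) (a : G) :
    (single a 1 - 1 : k[G]) ∈ Ideal.span (Set.range fun j => single (b j) 1 - 1) := by
  have ha : a ∈ AddSubmonoid.closure (Set.range b) := hb ▸ AddSubmonoid.mem_top a
  induction ha using AddSubmonoid.closure_induction with
  | mem _ h =>
    obtain ⟨j, rfl⟩ := h
    exact Ideal.subset_span ⟨j, rfl⟩
  | zero =>
    rw [← one_def, sub_self]
    exact zero_mem _
  | add x y _ _ hx hy =>
    rw [single_add_sub_one]
    exact add_mem (add_mem (Ideal.mul_mem_right _ _ hx) hx) hy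

theorem single_sub_one_pow_char_pow (p : ℕ) [Fact p.Prime] [CharP k p] (n : ℕ) (a : G) :
    (single a 1 - 1 : k[G]) ^ p ^ n = single (p ^ n • a) 1 - 1 := by
  have : CharP k[G] p := charP_of_injective_algebraMap' k p
  rw [sub_pow_char_pow, single_pow, one_pow, one_pow]

theorem coeff_zero_prod_single_sub_one {κ : Type*} [Fintype κ] {g : κ → G}
    (hg : ∀ t : Finset κ, t.Nonempty → ∑ i ∈ t, g i ≠ 0) :
    (∏ i, (single (g i) 1 - 1 : k[G])).coeff 0 = (-1) ^ Fintype.card κ := by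
  classical
  have hexpand : ∏ i, (single (g i) 1 - 1 : k[G]) =
      ∑ t : Finset κ, single (∑ i ∈ t, g i) ((-1) ^ #tᶜ) := by
    simp_rw [sub_eq_add_neg, one_def, ← single_neg, Fintype.prod_add, prod_single,
      prod_const_one, sum_const_zero, single_mul_single, add_zero, one_mul, prod_const]
  rw [hexpand, coeff_sum, Finsupp.finsetSum_apply, sum_eq_single ∅]
  · simp
  · intro t _ ht
    rw [coeff_single, Finsupp.single_apply, if_neg (hg t (nonempty_iff_ne_empty.2 ht))]
  · simp

end AddMonoidAlgebra

section ZeroSum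

variable {G H : Type*} [AddCommMonoid G] [AddCommMonoid H]

open AddMonoidAlgebra in
theorem exists_nonempty_sum_eq_zero_of_closure_eq_top {ι κ : Type*} [Fintype ι] [Fintype κ]
    (p : ℕ) [Fact p.Prime] {b : ι → G} (hb : AddSubmonoid.closure (Set.range b) = ⊤)
    {n : ι → ℕ} (hn : ∀ j, p ^ n j • b j = 0) (g : κ → G)
    (hcard : ∑ j, (p ^ n j - 1) < Fintype.card κ) :
    ∃ t : Finset κ, t.Nonempty ∧ ∑ i ∈ t, g i = 0 := by
  by_contra! hg
  have hprod : ∏ i, (single (g i) 1 - 1 : (ZMod p)[G]) = 0 :=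
    prod_eq_zero_of_mem_span_range (N := fun j => p ^ n j)
      (fun j => by rw [single_sub_one_pow_char_pow, hn, ← one_def, sub_self])
      (fun i => single_sub_one_mem_span_of_closure_eq_top hb (g i)) hcard
  have hcoeff := coeff_zero_prod_single_sub_one (k := ZMod p) hg
  rw [hprod, coeff_zero, Finsupp.zero_apply] at hcoeff
  exact pow_ne_zero _ (neg_ne_zero.2 one_ne_zero) hcoeff.symm

theorem Multiset.exists_le_sum_eq_zero_of_closure_eq_top {ι : Type*} [Fintype ι] (p : ℕ)
    [Fact p.Prime] {b : ι → G} (hb : AddSubmonoid.closure (Set.range b) = ⊤) {n : ι → ℕ}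
    (hn : ∀ j, p ^ n j • b j = 0) (S : Multiset G) (hS : ∑ j, (p ^ n j - 1) < card S) :
    ∃ T ≤ S, T ≠ 0 ∧ T.sum = 0 := by
  classical
  obtain ⟨t, ht, hsum⟩ := exists_nonempty_sum_eq_zero_of_closure_eq_top p hb hn
    (fun x : S => (x : G)) (by rwa [Multiset.card_coe])
  refine ⟨t.val.map fun x : S => (x : G), ?_, by simpa using ht.ne_empty, hsum⟩
  calc t.val.map (fun x : S => (x : G)) ≤ (univ : Finset S).val.map fun x : S => (x : G) :=
        map_le_map (val_le_iff.2 t.subset_univ)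
    _ = S := map_univ_coe S

theorem AddEquiv.exists_le_sum_eq_zero (e : G ≃+ H) {N : ℕ}
    (hH : ∀ S : Multiset H, N ≤ Multiset.card S → ∃ T ≤ S, T ≠ 0 ∧ T.sum = 0)
    {S : Multiset G} (hS : N ≤ Multiset.card S) : ∃ T ≤ S, T ≠ 0 ∧ T.sum = 0 := by
  obtain ⟨T', hT'S, hT'0, hT'sum⟩ := hH (S.map e) (by rwa [Multiset.card_map])
  obtain ⟨T, hTS, rfl⟩ := Multiset.exists_le_map_eq_of_le_map_s12 hT'S
  refine ⟨T, hTS, fun h => hT'0 (by simp [h]), e.injective ?_⟩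
  rwa [map_multiset_sum, map_zero]

theorem exists_le_sum_eq_zero_card_le_of_card_eq_two_mul {m D : ℕ}
    (hG : ∀ S : Multiset G, D ≤ Multiset.card S → ∃ T ≤ S, T ≠ 0 ∧ T.sum = 0)
    (hD : D < 2 * m) {T : Multiset G} (hT : T.sum = 0) (hcard : Multiset.card T = 2 * m) :
    ∃ T₁ ≤ T, T₁ ≠ 0 ∧ T₁.sum = 0 ∧ Multiset.card T₁ ≤ m := by
  classical
  obtain ⟨W, hWT, hW⟩ := Multiset.exists_le_card_eq (show 2 * m - 1 ≤ Multiset.card T by omega)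
  obtain ⟨T₁, hT₁W, hT₁0, hT₁sum⟩ := hG W (by omega)
  have hT₁T := hT₁W.trans hWT
  have hT₁card : Multiset.card T₁ ≤ 2 * m - 1 := hW ▸ Multiset.card_le_card hT₁W
  by_cases hshort : Multiset.card T₁ ≤ m
  · exact ⟨T₁, hT₁T, hT₁0, hT₁sum, hshort⟩
  have hcompl : Multiset.card (T - T₁) = 2 * m - Multiset.card T₁ := by
    rw [Multiset.card_sub hT₁T, hcard]
  have hsum := congrArg Multiset.sum (tsub_add_cancel_of_le hT₁T)
  rw [Multiset.sum_add, hT₁sum, add_zero, hT] at hsum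
  refine ⟨T - T₁, tsub_le_self, fun h => ?_, hsum, by omega⟩
  rw [h, Multiset.card_zero] at hcompl
  omega

theorem Multiset.sum_map_prodMk_one (m : ℕ) (T : Multiset G) :
    (T.map fun g => ((1 : ZMod m), g)).sum = ((card T : ZMod m), T.sum) := by
  induction T using Multiset.induction_on with
  | empty => simp [Prod.ext_iff]
  | cons a T ih => simp [ih, add_comm]

theorem exists_le_sum_eq_zero_card_le_of_zmod_prod {m D N : ℕ}
    (hG : ∀ S : Multiset G, D ≤ Multiset.card S → ∃ T ≤ S, T ≠ 0 ∧ T.sum = 0)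
    (hlift : ∀ S : Multiset (ZMod m × G), N ≤ Multiset.card S → ∃ T ≤ S, T ≠ 0 ∧ T.sum = 0)
    (hD : D < 2 * m) (hN : N < 3 * m) {S : Multiset G} (hS : N ≤ Multiset.card S) :
    ∃ T ≤ S, T ≠ 0 ∧ T.sum = 0 ∧ Multiset.card T ≤ m := by
  obtain ⟨S', hS'S, hS'⟩ := Multiset.exists_le_card_eq hS
  obtain ⟨T', hT'S', hT'0, hT'sum⟩ :=
    hlift (S'.map fun g => ((1 : ZMod m), g)) (by rw [Multiset.card_map, hS'])
  obtain ⟨T, hTS', rfl⟩ := Multiset.exists_le_map_eq_of_le_map_s12 hT'S'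
  rw [Multiset.sum_map_prodMk_one, Prod.mk_eq_zero, ZMod.natCast_eq_zero_iff] at hT'sum
  obtain ⟨⟨c, hc⟩, hTsum⟩ := hT'sum
  have hT0 : T ≠ 0 := fun h => hT'0 (by simp [h])
  have hTcard : 0 < Multiset.card T := Multiset.card_pos.2 hT0
  have hTN : Multiset.card T ≤ N := hS' ▸ Multiset.card_le_card hTS'
  have hc0 : c ≠ 0 := by
    rintro rfl
    rw [mul_zero] at hc
    omega
  have hc3 : c < 3 := Nat.lt_of_mul_lt_mul_left (a := m) (by rw [← hc]; omega)
  obtain rfl | rfl : c = 1 ∨ c = 2 := by omega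
  · exact ⟨T, hTS'.trans hS'S, hT0, hTsum, by omega⟩
  · obtain ⟨T₁, hT₁T, hT₁⟩ :=
      exists_le_sum_eq_zero_card_le_of_card_eq_two_mul hG hD hTsum (by rw [hc, mul_comm])
    exact ⟨T₁, hT₁T.trans (hTS'.trans hS'S), hT₁⟩

end ZeroSum

section PiZMod

variable {ι : Type*} [Fintype ι]

theorem closure_range_pi_single_one_zmod [DecidableEq ι] (n : ι → ℕ) [∀ i, NeZero (n i)] :
    AddSubmonoid.closure (Set.range fun j => (Pi.single j 1 : ∀ i, ZMod (n i))) = ⊤ := by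
  refine eq_top_iff.2 fun a _ => ?_
  rw [← Finset.univ_sum_single a]
  refine AddSubmonoid.sum_mem _ fun j _ => ?_
  rw [← ZMod.natCast_zmod_val (a j), ← nsmul_one, Pi.single_smul]
  exact AddSubmonoid.nsmul_mem _ (AddSubmonoid.subset_closure (Set.mem_range_self j)) _

theorem exists_le_sum_eq_zero_pi_zmod_pow (p : ℕ) [Fact p.Prime] (e : ι → ℕ)
    (S : Multiset (∀ i, ZMod (p ^ e i))) (hS : ∑ i, (p ^ e i - 1) < Multiset.card S) :
    ∃ T ≤ S, T ≠ 0 ∧ T.sum = 0 := by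
  classical
  have : ∀ i, NeZero (p ^ e i) := fun i => ⟨pow_ne_zero _ (Fact.out : p.Prime).ne_zero⟩
  refine Multiset.exists_le_sum_eq_zero_of_closure_eq_top p
    (closure_range_pi_single_one_zmod _) (fun j => ?_) S hS
  rw [← Pi.single_smul, nsmul_one, ZMod.natCast_self, Pi.single_zero]

theorem exists_le_sum_eq_zero_zmod_pow_prod_pi (p : ℕ) [Fact p.Prime] (k : ℕ) (e : ι → ℕ)
    (S : Multiset (ZMod (p ^ k) × ∀ i, ZMod (p ^ e i)))
    (hS : p ^ k - 1 + ∑ i, (p ^ e i - 1) < Multiset.card S) : ∃ T ≤ S, T ≠ 0 ∧ T.sum = 0 := by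
  let f : Option ι → ℕ := fun o => o.elim k e
  refine (RingEquiv.piOptionEquivProd (R := fun o => ZMod (p ^ f o))).symm.toAddEquiv
    |>.exists_le_sum_eq_zero (fun S' hS' => exists_le_sum_eq_zero_pi_zmod_pow p f S' hS') ?_
  rwa [Fintype.sum_option, Nat.succ_le_iff]

theorem exists_zero_sum_free_pi_zmod (n : ι → ℕ) :
    ∃ S : Multiset (∀ i, ZMod (n i)), Multiset.card S = ∑ i, (n i - 1) ∧
      ∀ T ≤ S, T ≠ 0 → T.sum ≠ 0 := by
  classical
  let g : (Σ i, Fin (n i - 1)) → ∀ i, ZMod (n i) := fun x i => if x.1 = i then 1 else 0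
  refine ⟨univ.val.map g, by simp, fun T hT hT0 hTsum => ?_⟩
  obtain ⟨t, ht, rfl⟩ := Multiset.exists_le_map_eq_of_le_map_s12 hT
  let s : Finset (Σ i, Fin (n i - 1)) := ⟨t, Multiset.nodup_of_le ht univ.nodup⟩
  obtain ⟨x, hx⟩ : ∃ x, x ∈ t :=
    Multiset.exists_mem_of_ne_zero fun h => hT0 (by rw [h, Multiset.map_zero])
  have hcoord : (t.map g).sum x.1 = (#{y ∈ s | y.1 = x.1} : ZMod (n x.1)) := by
    change (∑ y ∈ s, g y) x.1 = _
    simp only [g, Finset.sum_apply, sum_boole]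
  rw [hTsum, Pi.zero_apply, eq_comm, ZMod.natCast_eq_zero_iff] at hcoord
  have hpos : 0 < #{y ∈ s | y.1 = x.1} := card_pos.2 ⟨x, mem_filter.2 ⟨hx, rfl⟩⟩
  have hle : #{y ∈ s | y.1 = x.1} ≤ n x.1 - 1 :=
    (card_le_card (filter_subset_filter _ s.subset_univ)).trans
      (card_filter_sigma_fst_eq _ _).le
  have := Nat.le_of_dvd hpos hcoord
  omega

theorem exponent_pi_zmod_pow_eq_of_forall_le (p : ℕ) {e : ι → ℕ} {j : ι}
    (hj : ∀ i, e i ≤ e j) : AddMonoid.exponent (∀ i, ZMod (p ^ e i)) = p ^ e j := by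
  rw [AddMonoid.exponent_pi]
  simp only [ZMod.exponent]
  exact Nat.dvd_antisymm (Finset.lcm_dvd fun i _ => pow_dvd_pow p (hj i))
    (Finset.dvd_lcm (Finset.mem_univ j))

end PiZMod

section Invariants

variable {G : Type*} [AddCommGroup G]

theorem hasDZS_one_iff (S : Multiset G) : HasDZS 1 S ↔ ∃ T ≤ S, T ≠ 0 ∧ T.sum = 0 := by
  constructor
  · rintro ⟨L, hlen, hL, hle⟩
    obtain ⟨T, rfl⟩ := List.length_eq_one_iff.1 hlen
    exact ⟨T, by simpa using hle, hL T (List.mem_singleton_self T)⟩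
  · rintro ⟨T, hle, hT⟩
    exact ⟨[T], rfl, by simpa using hT, by simpa using hle⟩

theorem hasShortDZS_one_iff (S : Multiset G) :
    HasShortDZS 1 S ↔
      ∃ T ≤ S, T ≠ 0 ∧ T.sum = 0 ∧ Multiset.card T ≤ AddMonoid.exponent G := by
  constructor
  · rintro ⟨L, hlen, hL, hle⟩
    obtain ⟨T, rfl⟩ := List.length_eq_one_iff.1 hlen
    exact ⟨T, by simpa using hle, hL T (List.mem_singleton_self T)⟩
  · rintro ⟨T, hle, hT⟩
    exact ⟨[T], rfl, by simpa using hT, by simpa using hle⟩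

theorem davR_one_eq_card_add_one {S : Multiset G} (hS : ∀ T ≤ S, T ≠ 0 → T.sum ≠ 0)
    (hforce : ∀ S' : Multiset G, Multiset.card S + 1 ≤ Multiset.card S' →
      ∃ T ≤ S', T ≠ 0 ∧ T.sum = 0) :
    DavR G 1 = Multiset.card S + 1 := by
  have hmem : Multiset.card S + 1 ∈
      {k | 0 < k ∧ ∀ S' : Multiset G, k ≤ Multiset.card S' → HasDZS 1 S'} :=
    ⟨Nat.succ_pos _, fun S' hS' => (hasDZS_one_iff S').2 (hforce S' hS')⟩
  refine le_antisymm (Nat.sInf_le hmem) (le_csInf ⟨_, hmem⟩ fun k ⟨_, hk⟩ => ?_)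
  by_contra! hlt
  obtain ⟨T, hTS, hT0, hTsum⟩ := (hasDZS_one_iff S).1 (hk S (by omega))
  exact hS T hTS hT0 hTsum

theorem etaR_one_le {N : ℕ} (hN : 0 < N)
    (h : ∀ S : Multiset G, N ≤ Multiset.card S →
      ∃ T ≤ S, T ≠ 0 ∧ T.sum = 0 ∧ Multiset.card T ≤ AddMonoid.exponent G) :
    EtaR G 1 ≤ N :=
  Nat.sInf_le ⟨hN, fun S hS => (hasShortDZS_one_iff S).2 (h S hS)⟩

end Invariants

theorem davR_one_pi_zmod_pow {ι : Type*} [Fintype ι] (p : ℕ) [Fact p.Prime] (e : ι → ℕ) :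
    DavR (∀ i, ZMod (p ^ e i)) 1 = 1 + ∑ i, (p ^ e i - 1) := by
  obtain ⟨S, hcard, hS⟩ := exists_zero_sum_free_pi_zmod fun i => p ^ e i
  rw [davR_one_eq_card_add_one hS fun S' hS' =>
    exists_le_sum_eq_zero_pi_zmod_pow p e S' (by omega), hcard, add_comm]

theorem stmt_12_general (p d : ℕ) (hp : p.Prime) (e : Fin (d + 1) → ℕ)
    (hmono : Monotone e)
    (hbig : 1 + ∑ i : Fin d, (p ^ e i.castSucc - 1) ≤ p ^ e (Fin.last d)) :
    EtaR (∀ i, ZMod (p ^ e i)) 1 ≤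
        DavR (∀ i, ZMod (p ^ e i)) 1 + AddMonoid.exponent (∀ i, ZMod (p ^ e i)) ∧
      DavR (∀ i, ZMod (p ^ e i)) 1 + AddMonoid.exponent (∀ i, ZMod (p ^ e i)) =
        2 * p ^ e (Fin.last d) + ∑ i : Fin d, (p ^ e i.castSucc - 1) := by
  have : Fact p.Prime := ⟨hp⟩
  set m := p ^ e (Fin.last d)
  set σ := ∑ i : Fin d, (p ^ e i.castSucc - 1)
  have hm : 0 < m := pow_pos hp.pos _
  have hsplit : ∑ i, (p ^ e i - 1) = σ + (m - 1) := Fin.sum_univ_castSucc _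
  have hexp : AddMonoid.exponent (∀ i, ZMod (p ^ e i)) = m :=
    exponent_pi_zmod_pow_eq_of_forall_le p fun i => hmono (Fin.le_last i)
  have hdav := davR_one_pi_zmod_pow p e
  have heta : EtaR (∀ i, ZMod (p ^ e i)) 1 ≤ 2 * m + σ - 1 := by
    refine etaR_one_le (by omega) fun S hS => hexp ▸ ?_
    exact exists_le_sum_eq_zero_card_le_of_zmod_prod (D := m + σ)
      (fun S hS => exists_le_sum_eq_zero_pi_zmod_pow p e S (by omega))
      (fun S hS => exists_le_sum_eq_zero_zmod_pow_prod_pi p _ e S (by omega))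
      (by omega) (by omega) hS
  omega

/-- For a `p`-group `G = C_{p^{e_1}} × ⋯ × C_{p^{e_{d+1}}}` with
`e_1 ≤ ⋯ ≤ e_{d+1}` and `p^{e_{d+1}} ≥ 1 + ∑_{i≤d}(p^{e_i}-1)`, we have
`η(G) ≤ D(G) + exp(G) = 2p^{e_{d+1}} + ∑_{i≤d} p^{e_i} - d`. -/
theorem stmt_12 (p d : ℕ) (hp : p.Prime) (e : Fin (d + 1) → ℕ)
    (hpos : ∀ i, 0 < e i) (hmono : Monotone e)
    (hbig : 1 + ∑ i : Fin d, (p ^ e i.castSucc - 1) ≤ p ^ e (Fin.last d)) :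
    EtaR (∀ i, ZMod (p ^ e i)) 1 ≤
        DavR (∀ i, ZMod (p ^ e i)) 1 + AddMonoid.exponent (∀ i, ZMod (p ^ e i)) ∧
      DavR (∀ i, ZMod (p ^ e i)) 1 + AddMonoid.exponent (∀ i, ZMod (p ^ e i)) =
        2 * p ^ e (Fin.last d) + ∑ i : Fin d, (p ^ e i.castSucc - 1) :=
  stmt_12_general p d hp e hmono hbig
end
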